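/- If X ~ BGamma(α,β,δ) (with β, δ fixed, 0 < δ < 2β), then the score has zero mean: E[(d/dα) log f(X;α,β,δ)] = 0, i.e., E[log X] = Z'(α)/Z(α) − log β + ψ(α), where Z(α) = 2 + (αδ/β)[(1+α)δ/β − 2] and Z'(α) = (δ/β)[(1+2α)δ/β − 2]. -/

import Mathlib

open MeasureTheory Real Set

noncomputable def Zc (α β δ : ℝ) : ℝ := 2 + (α * δ / β) * ((1 + α) * δ / β - 2)

noncomputable def bgammaPDF (α β δ x : ℝ) : ℝ :=
  (1 + (1 - δ * x) ^ 2) / Zc α β δ * (β ^ α / Real.Gamma α) * x ^ (α - 1) * Real.exp (-β * x)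

noncomputable def gammaPDF (α β x : ℝ) : ℝ :=
  β ^ α / Real.Gamma α * x ^ (α - 1) * Real.exp (-β * x)

/-!
Expanding `1 + (1 - δx)² = 2 - 2δx + δ²x²` and absorbing the powers of `x` into the Gamma
densities writes the BGamma density as `(2 g_α - (2δα/β) g_{α+1} + (δ²α(α+1)/β²) g_{α+2}) / Z(α)`,
where `g_s` is the Gamma(s, β) density and the three coefficients add up to `Z(α)`.
For `Y ~ Gamma(s, β)` the substitution `x = t / β` reduces `E[log Y]` to the case `β = 1`, where
differentiating Euler's integral under the integral sign gives `E[log Y] = ψ(s) - log β`.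
The recurrence `ψ(s + 1) = ψ(s) + 1/s`, from `Γ(s + 1) = s Γ(s)`, turns the combination into
`ψ(α) - log β` plus the correction `(δ/β)((1 + 2α)δ/β - 2) / Z(α)`.
-/

open Filter Asymptotics
open scoped Topology

namespace Real

lemma mellinConvergent_log_mul_exp_neg {s : ℂ} (hs : 0 < s.re) :
    MellinConvergent (fun t => Real.log t • ((Real.exp (-t) : ℝ) : ℂ)) s := by
  refine (mellin_hasDerivAt_of_isBigO_rpow (E := ℂ) ?_ ?_ (lt_add_one _) ?_ hs).1
  · exact (Complex.continuous_ofReal.comp (continuous_exp.comp continuous_neg)).continuousOn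
      |>.locallyIntegrableOn measurableSet_Ioi
  · rw [← isBigO_norm_left]
    simp_rw [Complex.norm_real, isBigO_norm_left]
    simpa only [neg_one_mul] using (isLittleO_exp_neg_mul_rpow_atTop zero_lt_one _).isBigO
  · simp_rw [neg_zero, rpow_zero]
    refine isBigO_const_of_tendsto (?_ : Tendsto _ _ (𝓝 (1 : ℂ))) one_ne_zero
    rw [(by simp : (1 : ℂ) = Real.exp (-0))]
    exact (Complex.continuous_ofReal.comp (continuous_exp.comp continuous_neg)).continuousWithinAt

lemma cpow_mul_log_mul_exp_neg_eq_ofReal {s t : ℝ} (ht : 0 < t) :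
    (t : ℂ) ^ ((s : ℂ) - 1) * (Real.log t * Real.exp (-t))
      = ((t ^ (s - 1) * (Real.log t * Real.exp (-t)) : ℝ) : ℂ) := by
  rw [← Complex.ofReal_one, ← Complex.ofReal_sub, ← Complex.ofReal_cpow ht.le]
  push_cast
  ring

lemma integrableOn_rpow_mul_log_mul_exp_neg {s : ℝ} (hs : 0 < s) :
    IntegrableOn (fun t => t ^ (s - 1) * (Real.log t * Real.exp (-t))) (Ioi 0) := by
  refine IntegrableOn.congr_fun (mellinConvergent_log_mul_exp_neg (s := s) (by simpa using hs)).re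
    (fun t ht => ?_) measurableSet_Ioi
  simp only [smul_eq_mul, Complex.real_smul]
  rw [cpow_mul_log_mul_exp_neg_eq_ofReal ht]
  rfl

lemma hasDerivAt_Gamma_of_pos {s : ℝ} (hs : 0 < s) :
    HasDerivAt Gamma (∫ t in Ioi 0, t ^ (s - 1) * (Real.log t * Real.exp (-t))) s := by
  have hs' : 0 < (s : ℂ).re := by simpa using hs
  have hGamma : Complex.Gamma =ᶠ[𝓝 (s : ℂ)] Complex.GammaIntegral := by
    filter_upwards [(Complex.continuous_re.isOpen_preimage _ isOpen_Ioi).mem_nhds hs'] with z hz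
    exact Complex.Gamma_eq_integral hz
  have h := ((Complex.hasDerivAt_GammaIntegral hs').congr_of_eventuallyEq hGamma).real_of_complex
  rwa [setIntegral_congr_fun measurableSet_Ioi fun t ht => cpow_mul_log_mul_exp_neg_eq_ofReal ht,
    integral_complex_ofReal, Complex.ofReal_re] at h

lemma deriv_log_Gamma_of_pos {s : ℝ} (hs : 0 < s) :
    deriv (fun s => Real.log (Gamma s)) s
      = (∫ t in Ioi 0, t ^ (s - 1) * (Real.log t * Real.exp (-t))) / Gamma s :=
  ((hasDerivAt_Gamma_of_pos hs).log (Gamma_pos_of_pos hs).ne').deriv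

lemma hasDerivAt_log_Gamma_of_pos {s : ℝ} (hs : 0 < s) :
    HasDerivAt (fun s => Real.log (Gamma s)) (deriv (fun s => Real.log (Gamma s)) s) s :=
  ((differentiableOn_Gamma_Ioi s hs).differentiableAt (Ioi_mem_nhds hs)
    |>.log (Gamma_pos_of_pos hs).ne').hasDerivAt

lemma deriv_log_Gamma_add_one {s : ℝ} (hs : 0 < s) :
    deriv (fun s => Real.log (Gamma s)) (s + 1) = deriv (fun s => Real.log (Gamma s)) s + s⁻¹ := by
  have hshift : HasDerivAt (fun x => Real.log (Gamma (x + 1)))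
      (deriv (fun s => Real.log (Gamma s)) (s + 1)) s :=
    (hasDerivAt_log_Gamma_of_pos (by positivity)).comp_add_const s 1
  have hprod : HasDerivAt (fun x => Real.log x + Real.log (Gamma x))
      (s⁻¹ + deriv (fun s => Real.log (Gamma s)) s) s :=
    (hasDerivAt_log hs.ne').add (hasDerivAt_log_Gamma_of_pos hs)
  have heq : (fun x => Real.log (Gamma (x + 1)))
      =ᶠ[𝓝 s] fun x => Real.log x + Real.log (Gamma x) := by
    filter_upwards [Ioi_mem_nhds hs] with x hx
    rw [Gamma_add_one hx.ne', Real.log_mul hx.ne' (Gamma_pos_of_pos hx).ne']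
  rw [hshift.unique (hprod.congr_of_eventuallyEq heq), add_comm]

end Real

lemma gammaPDF_one_eq (s t : ℝ) :
    gammaPDF s 1 t = (Real.Gamma s)⁻¹ * (Real.exp (-t) * t ^ (s - 1)) := by
  simp only [gammaPDF, one_rpow, neg_mul, one_mul]
  ring

lemma integrableOn_gammaPDF_one {s : ℝ} (hs : 0 < s) : IntegrableOn (gammaPDF s 1) (Ioi 0) := by
  rw [show gammaPDF s 1 = _ from funext (gammaPDF_one_eq s)]
  exact (Real.GammaIntegral_convergent hs).const_mul _

lemma integral_gammaPDF_one {s : ℝ} (hs : 0 < s) : ∫ t in Ioi 0, gammaPDF s 1 t = 1 := by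
  simp only [gammaPDF_one_eq, integral_const_mul, ← Real.Gamma_eq_integral hs]
  exact inv_mul_cancel₀ (Real.Gamma_pos_of_pos hs).ne'

lemma log_mul_gammaPDF_one_eq (s t : ℝ) :
    Real.log t * gammaPDF s 1 t
      = (Real.Gamma s)⁻¹ * (t ^ (s - 1) * (Real.log t * Real.exp (-t))) := by
  rw [gammaPDF_one_eq]
  ring

lemma integrableOn_log_mul_gammaPDF_one {s : ℝ} (hs : 0 < s) :
    IntegrableOn (fun t => Real.log t * gammaPDF s 1 t) (Ioi 0) := by
  simp only [log_mul_gammaPDF_one_eq]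
  exact (Real.integrableOn_rpow_mul_log_mul_exp_neg hs).const_mul _

lemma integral_log_mul_gammaPDF_one {s : ℝ} (hs : 0 < s) :
    ∫ t in Ioi 0, Real.log t * gammaPDF s 1 t = deriv (fun s => Real.log (Real.Gamma s)) s := by
  simp only [log_mul_gammaPDF_one_eq, integral_const_mul, Real.deriv_log_Gamma_of_pos hs]
  ring

lemma log_mul_gammaPDF_eq {s β x : ℝ} (hβ : 0 < β) (hx : 0 < x) :
    Real.log x * gammaPDF s β x
      = β * ((Real.log (β * x) - Real.log β) * gammaPDF s 1 (β * x)) := by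
  rw [Real.log_mul hβ.ne' hx.ne', add_sub_cancel_left]
  simp only [gammaPDF, one_rpow, Real.mul_rpow hβ.le hx.le, Real.rpow_sub_one hβ.ne', neg_mul,
    one_mul]
  field_simp

lemma integrableOn_log_mul_gammaPDF {s β : ℝ} (hs : 0 < s) (hβ : 0 < β) :
    IntegrableOn (fun x => Real.log x * gammaPDF s β x) (Ioi 0) := by
  have h : IntegrableOn (fun t => (Real.log t - Real.log β) * gammaPDF s 1 t) (Ioi (β * 0)) := by
    rw [mul_zero]
    simp only [sub_mul]
    exact (integrableOn_log_mul_gammaPDF_one hs).sub ((integrableOn_gammaPDF_one hs).const_mul _)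
  exact IntegrableOn.congr_fun (((integrableOn_Ioi_comp_mul_left_iff _ 0 hβ).2 h).const_mul β)
    (fun x hx => (log_mul_gammaPDF_eq hβ hx).symm) measurableSet_Ioi

lemma integral_log_mul_gammaPDF {s β : ℝ} (hs : 0 < s) (hβ : 0 < β) :
    ∫ x in Ioi 0, Real.log x * gammaPDF s β x
      = deriv (fun s => Real.log (Real.Gamma s)) s - Real.log β := by
  rw [setIntegral_congr_fun measurableSet_Ioi fun x hx => log_mul_gammaPDF_eq hβ hx,
    integral_const_mul,
    integral_comp_mul_left_Ioi (fun t => (Real.log t - Real.log β) * gammaPDF s 1 t) 0 hβ,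
    mul_zero, smul_eq_mul, mul_inv_cancel_left₀ hβ.ne']
  simp only [sub_mul]
  rw [integral_sub (integrableOn_log_mul_gammaPDF_one hs)
      ((integrableOn_gammaPDF_one hs).const_mul _), integral_const_mul,
    integral_log_mul_gammaPDF_one hs, integral_gammaPDF_one hs, mul_one]

lemma gammaPDF_add_one {s β x : ℝ} (hs : s ≠ 0) (hβ : β ≠ 0) (hx : x ≠ 0) :
    gammaPDF (s + 1) β x = β / s * x * gammaPDF s β x := by
  simp only [gammaPDF, Real.Gamma_add_one hs, Real.rpow_add_one hβ, add_sub_cancel_right,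
    Real.rpow_sub_one hx]
  field_simp

lemma bgammaPDF_eq_sum_gammaPDF {α β δ x : ℝ} (hα : 0 < α) (hβ : β ≠ 0) (hx : x ≠ 0) :
    bgammaPDF α β δ x = (2 * gammaPDF α β x - 2 * δ * α / β * gammaPDF (α + 1) β x
      + δ ^ 2 * α * (α + 1) / β ^ 2 * gammaPDF (α + 2) β x) / Zc α β δ := by
  rw [show α + 2 = α + 1 + 1 by ring, gammaPDF_add_one (s := α + 1) (by positivity) hβ hx,
    gammaPDF_add_one hα.ne' hβ hx]
  simp only [bgammaPDF, gammaPDF]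
  field_simp
  ring

lemma Zc_eq_two_sub_add (α β δ : ℝ) :
    Zc α β δ = 2 - 2 * δ * α / β + δ ^ 2 * α * (α + 1) / β ^ 2 := by
  rw [Zc]
  ring

lemma Zc_pos {α : ℝ} (hα : 0 < α) (β δ : ℝ) : 0 < Zc α β δ := by
  -- as a quadratic in `δ / β`, `Zc` has discriminant `-4α(α + 2) < 0`
  rw [Zc, mul_div_assoc, mul_div_assoc]
  nlinarith [mul_nonneg hα.le (sq_nonneg ((α + 1) * (δ / β) - 1))]

theorem bgamma_score_zero_mean_general (α β δ : ℝ) (hα : 0 < α) (hβ : 0 < β) :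
    ∫ x in Ioi (0:ℝ), Real.log x * bgammaPDF α β δ x =
      (δ / β) * ((1 + 2 * α) * δ / β - 2) / Zc α β δ - Real.log β
        + deriv (fun s => Real.log (Real.Gamma s)) α := by
  have hα1 : 0 < α + 1 := by positivity
  have hα2 : 0 < α + 2 := by positivity
  have hψ1 := Real.deriv_log_Gamma_add_one hα
  have hψ2 := Real.deriv_log_Gamma_add_one hα1
  rw [add_assoc, one_add_one_eq_two] at hψ2
  set ψ := deriv (fun s => Real.log (Real.Gamma s))
  have I₀ := (integrableOn_log_mul_gammaPDF hα hβ).const_mul 2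
  have I₁ := (integrableOn_log_mul_gammaPDF hα1 hβ).const_mul (2 * δ * α / β)
  have I₂ := (integrableOn_log_mul_gammaPDF hα2 hβ).const_mul (δ ^ 2 * α * (α + 1) / β ^ 2)
  calc ∫ x in Ioi (0:ℝ), Real.log x * bgammaPDF α β δ x
      = ∫ x in Ioi (0:ℝ), (2 * (Real.log x * gammaPDF α β x)
          - 2 * δ * α / β * (Real.log x * gammaPDF (α + 1) β x)
          + δ ^ 2 * α * (α + 1) / β ^ 2 * (Real.log x * gammaPDF (α + 2) β x)) / Zc α β δ := by
        refine setIntegral_congr_fun measurableSet_Ioi fun x hx => ?_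
        rw [bgammaPDF_eq_sum_gammaPDF hα hβ.ne' (ne_of_gt hx)]
        ring
    _ = (2 * (ψ α - Real.log β) - 2 * δ * α / β * (ψ (α + 1) - Real.log β)
          + δ ^ 2 * α * (α + 1) / β ^ 2 * (ψ (α + 2) - Real.log β)) / Zc α β δ := by
        rw [integral_div, integral_add ?_ I₂, integral_sub I₀ I₁, integral_const_mul,
          integral_const_mul, integral_const_mul, integral_log_mul_gammaPDF hα hβ,
          integral_log_mul_gammaPDF hα1 hβ, integral_log_mul_gammaPDF hα2 hβ]
        exact I₀.sub I₁
    _ = _ := by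
        rw [hψ2, hψ1]
        have hZ := (Zc_pos hα β δ).ne'
        rw [div_eq_iff hZ, add_mul, sub_mul, div_mul_cancel₀ _ hZ, Zc_eq_two_sub_add]
        field_simp
        ring

theorem bgamma_score_zero_mean (α β δ : ℝ) (hα : 0 < α) (hβ : 0 < β) (hδ : 0 < δ)
    (hδ2 : δ < 2 * β) :
    ∫ x in Ioi (0:ℝ), Real.log x * bgammaPDF α β δ x =
      (δ / β) * ((1 + 2 * α) * δ / β - 2) / Zc α β δ - Real.log β
        + deriv (fun s => Real.log (Real.Gamma s)) α :=
  bgamma_score_zero_mean_general α β δ hα hβ
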